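/- Let A,B,C,D,p,q be real numbers with AD−BC=1 and B≠0, and set m_Λ(x) = exp{ iAx²/(2B) }. If f,g ∈ L¹(ℝ)∩L²(ℝ) and h(t) = (2π|B|)^{−1/2} (m_Λ(t))^* · ∫_ℝ m_Λ(x) f(x) · m_Λ(t−x) g(t−x) dx, then for every ω ∈ ℝ one has ĥ_Λ(ω) = Φ_Λ(ω) · f̂_Λ(ω) · ĝ_Λ(ω), where Φ_Λ(ω) = exp{ iω(Dp−Bq)/B } · exp{ −iDω²/(2B) }. -/

import Mathlib

/-! Write the SAFT kernel as `m_Λ(x) · e(x) · E(ω)` with the chirp `m_Λ(x) = exp(iAx²/(2B))`,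
the additive character `e(x) = exp(ix(p - ω)/B)` and a phase `E(ω)` independent of `x`.
Since `m_Λ` is unimodular, multiplying `h` by `m_Λ` turns it into the ordinary convolution of
`m_Λ f` and `m_Λ g`, and integrating a convolution against a character gives the product of the
two integrals. The leftover phases `Φ_Λ(ω) E(ω)` cancel. -/

open MeasureTheory Real Set

/-- The special affine Fourier transform (SAFT) with parameter matrix
`[[A, B], [C, D]]` and offset `(p, q)` (the kernel does not involve `C`). -/
noncomputable def SAFT (A B D p q : ℝ) (f : ℝ → ℂ) (ω : ℝ) : ℂ :=
  (Real.sqrt (2 * Real.pi * |B|) : ℂ)⁻¹ *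
    ∫ x : ℝ, f x * Complex.exp ((Complex.I / (2 * (B : ℂ))) *
      ((A : ℂ) * (x : ℂ) ^ 2 + 2 * (x : ℂ) * ((p : ℂ) - (ω : ℂ))
        - 2 * (ω : ℂ) * ((D : ℂ) * (p : ℂ) - (B : ℂ) * (q : ℂ))
        + (D : ℂ) * (ω : ℂ) ^ 2))

open scoped Convolution ComplexConjugate

theorem integral_mul_convolution_of_map_add {G : Type*} [AddCommGroup G] [MeasurableSpace G]
    [MeasurableAdd₂ G] [MeasurableNeg G] {μ : Measure G} [SFinite μ] [μ.IsAddRightInvariant]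
    {χ u v : G → ℂ} (hχ : ∀ x y, χ (x + y) = χ x * χ y)
    (hu : Integrable (fun x => χ x * u x) μ) (hv : Integrable (fun x => χ x * v x) μ) :
    ∫ t, χ t * (u ⋆[ContinuousLinearMap.mul ℂ ℂ, μ] v) t ∂μ
      = (∫ x, χ x * u x ∂μ) * ∫ x, χ x * v x ∂μ := by
  have hmul : ∀ t, χ t * (u ⋆[ContinuousLinearMap.mul ℂ ℂ, μ] v) t
      = ((fun x => χ x * u x) ⋆[ContinuousLinearMap.mul ℂ ℂ, μ] fun x => χ x * v x) t := by
    intro t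
    simp only [convolution_def, ContinuousLinearMap.mul_apply', ← integral_const_mul]
    congr 1 with x
    rw [show χ t = χ x * χ (t - x) by rw [← hχ, add_sub_cancel]]
    ring
  simp_rw [hmul]
  exact integral_convolution _ hu hv

section SAFT

variable (A B D p q ω : ℝ)

noncomputable def saftChirp (x : ℝ) : ℂ :=
  Complex.exp (Complex.I * A * x ^ 2 / (2 * B))

noncomputable def saftCharacter (x : ℝ) : ℂ :=
  Complex.exp (Complex.I * x * (p - ω) / B)

noncomputable def saftPhase : ℂ :=
  Complex.exp (Complex.I / (2 * B) * (D * ω ^ 2 - 2 * ω * (D * p - B * q)))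

theorem norm_saftChirp (x : ℝ) : ‖saftChirp A B x‖ = 1 := by
  have hexponent :
      Complex.I * A * x ^ 2 / (2 * B) = ((A * x ^ 2 / (2 * B) : ℝ) : ℂ) * Complex.I := by
    push_cast; ring
  rw [saftChirp, hexponent]
  exact Complex.norm_exp_ofReal_mul_I _

theorem saftChirp_mul_conj (x : ℝ) : saftChirp A B x * conj (saftChirp A B x) = 1 := by
  rw [Complex.mul_conj', norm_saftChirp, Complex.ofReal_one, one_pow]

theorem norm_saftCharacter (x : ℝ) : ‖saftCharacter B p ω x‖ = 1 := by
  have hexponent : Complex.I * x * (p - ω) / B = ((x * (p - ω) / B : ℝ) : ℂ) * Complex.I := by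
    push_cast; ring
  rw [saftCharacter, hexponent]
  exact Complex.norm_exp_ofReal_mul_I _

theorem saftCharacter_add (x y : ℝ) :
    saftCharacter B p ω (x + y) = saftCharacter B p ω x * saftCharacter B p ω y := by
  simp only [saftCharacter, ← Complex.exp_add]
  congr 1
  push_cast
  ring

theorem SAFT_eq_saftPhase_mul_integral (f : ℝ → ℂ) :
    SAFT A B D p q f ω = (Real.sqrt (2 * Real.pi * |B|) : ℂ)⁻¹ * saftPhase B D p q ω *
      ∫ x, saftCharacter B p ω x * (saftChirp A B x * f x) := by
  have hkernel : ∀ x : ℝ, Complex.exp (Complex.I / (2 * B) *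
      (A * x ^ 2 + 2 * x * (p - ω) - 2 * ω * (D * p - B * q) + D * ω ^ 2))
      = saftPhase B D p q ω * (saftCharacter B p ω x * saftChirp A B x) := by
    intro x
    simp only [saftPhase, saftCharacter, saftChirp, ← Complex.exp_add]
    congr 1
    ring
  simp_rw [SAFT, hkernel, mul_assoc, ← integral_const_mul]
  congr 2 with x
  ring

theorem exp_mul_exp_mul_saftPhase_eq_one :
    (Complex.exp (Complex.I * ω * (D * p - B * q) / B) *
      Complex.exp (-(Complex.I * D * ω ^ 2) / (2 * B))) * saftPhase B D p q ω = 1 := by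
  rw [saftPhase, ← Complex.exp_add, ← Complex.exp_add, ← Complex.exp_zero]
  congr 1
  ring

theorem integrable_saftCharacter_mul_saftChirp_mul {f : ℝ → ℂ} (hf : Integrable f) :
    Integrable fun x => saftCharacter B p ω x * (saftChirp A B x * f x) := by
  refine (hf.bdd_mul (c := 1) ?_ ?_).bdd_mul (c := 1) ?_ ?_
  · exact Continuous.aestronglyMeasurable (by unfold saftChirp; fun_prop)
  · exact Filter.Eventually.of_forall fun x => (norm_saftChirp A B x).le
  · exact Continuous.aestronglyMeasurable (by unfold saftCharacter; fun_prop)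
  · exact Filter.Eventually.of_forall fun x => (norm_saftCharacter B p ω x).le

end SAFT

theorem saft_convolution_theorem_general (A B D p q : ℝ)
    (f g : ℝ → ℂ) (hf1 : Integrable f)
    (hg1 : Integrable g)
    (h : ℝ → ℂ)
    (hh : ∀ t : ℝ, h t = (Real.sqrt (2 * Real.pi * |B|) : ℂ)⁻¹ *
        (starRingEnd ℂ) (Complex.exp (Complex.I * (A : ℂ) * (t : ℂ) ^ 2 / (2 * (B : ℂ)))) *
        ∫ x : ℝ, (Complex.exp (Complex.I * (A : ℂ) * (x : ℂ) ^ 2 / (2 * (B : ℂ))) * f x) *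
          (Complex.exp (Complex.I * (A : ℂ) * ((t : ℂ) - (x : ℂ)) ^ 2 / (2 * (B : ℂ)))
            * g (t - x)))
    (ω : ℝ) :
    SAFT A B D p q h ω =
      (Complex.exp (Complex.I * (ω : ℂ) * ((D : ℂ) * (p : ℂ) - (B : ℂ) * (q : ℂ)) / (B : ℂ)) *
        Complex.exp (-(Complex.I * (D : ℂ) * (ω : ℂ) ^ 2) / (2 * (B : ℂ)))) *
      SAFT A B D p q f ω * SAFT A B D p q g ω := by
  set c : ℂ := (Real.sqrt (2 * Real.pi * |B|) : ℂ)⁻¹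
  set m := saftChirp A B
  set e := saftCharacter B p ω
  set F := fun x => m x * f x
  set G := fun x => m x * g x
  have hconv : ∀ t, m t * h t = c * (F ⋆[ContinuousLinearMap.mul ℂ ℂ, volume] G) t := by
    intro t
    have hunit := saftChirp_mul_conj A B t
    simp only [hh t, convolution_def, ContinuousLinearMap.mul_apply', F, G, m, saftChirp,
      Complex.ofReal_sub] at hunit ⊢
    rw [← mul_assoc, ← mul_assoc, mul_right_comm _ c, hunit, one_mul]
  calc SAFT A B D p q h ω = c * saftPhase B D p q ω * ∫ t, e t * (m t * h t) :=
        SAFT_eq_saftPhase_mul_integral ..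
    _ = c * saftPhase B D p q ω *
          (c * ∫ t, e t * (F ⋆[ContinuousLinearMap.mul ℂ ℂ, volume] G) t) := by
        simp_rw [hconv, mul_left_comm (e _) c, integral_const_mul]
    _ = c * saftPhase B D p q ω * (c * ((∫ x, e x * F x) * ∫ x, e x * G x)) := by
        rw [integral_mul_convolution_of_map_add (saftCharacter_add B p ω)
          (integrable_saftCharacter_mul_saftChirp_mul A B p ω hf1)
          (integrable_saftCharacter_mul_saftChirp_mul A B p ω hg1)]
    _ = _ := by
        rw [SAFT_eq_saftPhase_mul_integral A B D p q ω f,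
          SAFT_eq_saftPhase_mul_integral A B D p q ω g]
        linear_combination (-(c * c * saftPhase B D p q ω * (∫ x, e x * F x) *
          ∫ x, e x * G x)) * exp_mul_exp_mul_saftPhase_eq_one B D p q ω

/-- SAFT convolution theorem: the SAFT of the SAFT-convolution `h` of `f` and `g`
is the product of their SAFTs times the phase factor `Φ_Λ`. -/
theorem saft_convolution_theorem (A B C D p q : ℝ) (hΛ : A * D - B * C = 1) (hB : B ≠ 0)
    (f g : ℝ → ℂ) (hf1 : Integrable f) (hf2 : MemLp f 2)
    (hg1 : Integrable g) (hg2 : MemLp g 2)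
    (h : ℝ → ℂ)
    (hh : ∀ t : ℝ, h t = (Real.sqrt (2 * Real.pi * |B|) : ℂ)⁻¹ *
        (starRingEnd ℂ) (Complex.exp (Complex.I * (A : ℂ) * (t : ℂ) ^ 2 / (2 * (B : ℂ)))) *
        ∫ x : ℝ, (Complex.exp (Complex.I * (A : ℂ) * (x : ℂ) ^ 2 / (2 * (B : ℂ))) * f x) *
          (Complex.exp (Complex.I * (A : ℂ) * ((t : ℂ) - (x : ℂ)) ^ 2 / (2 * (B : ℂ)))
            * g (t - x)))
    (ω : ℝ) :
    SAFT A B D p q h ω =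
      (Complex.exp (Complex.I * (ω : ℂ) * ((D : ℂ) * (p : ℂ) - (B : ℂ) * (q : ℂ)) / (B : ℂ)) *
        Complex.exp (-(Complex.I * (D : ℂ) * (ω : ℂ) ^ 2) / (2 * (B : ℂ)))) *
      SAFT A B D p q f ω * SAFT A B D p q g ω :=
  saft_convolution_theorem_general A B D p q f g hf1 hg1 h hh ω
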